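/- (Kirk's/Margrabe exchange option formula, exact case K = 0.) Let γ² denote the standard Gaussian measure on ℝ² (two independent standard normal coordinates u, w) and Φ the standard normal cumulative distribution function. Let x_e, x_g > 0, σ_e, σ_g > 0, ρ ∈ (−1, 1), and set σ = √(σ_g² − 2ρσ_eσ_g + σ_e²) (which is strictly positive). Then ∫_{ℝ²} (x_g·exp(σ_g·(ρu + √(1−ρ²)·w) − σ_g²/2) − x_e·exp(σ_e·u − σ_e²/2))⁺ dγ²(u, w) = x_g·Φ(ln(x_g/x_e)/σ + σ/2) − x_e·Φ(ln(x_g/x_e)/σ − σ/2). -/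

import Mathlib

/-!
Both underlyings have the form `x · exp (⟪h, p⟫ - |h|² / 2)` for a vector `h ∈ ℝ²`
(`g` for `X_g`, `e` for `X_e`), and the exercise region `{X_e ≤ X_g}` is the half-plane
`{c ≤ ⟪g - e, p⟫}`. Weighting the standard Gaussian measure on `ℝ²` by
`exp (⟪h, p⟫ - |h|² / 2)` translates it by `h` (Cameron–Martin), so each of the two terms
is the Gaussian measure of a translated half-plane. As `⟪g - e, p⟫` is a centred normal
variable of variance `σ² = |g - e|²`, these measures are values of `Φ`.
-/

open MeasureTheory ProbabilityTheory Real

/-- The cumulative distribution function of the standard Gaussian measure on `ℝ`. -/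
noncomputable def stdNormalCDF (x : ℝ) : ℝ := ((gaussianReal 0 1) (Set.Iic x)).toReal

lemma gaussianPDFReal_mul_exp_tilt (s x : ℝ) :
    gaussianPDFReal 0 1 x * rexp (s * x - s ^ 2 / 2) = gaussianPDFReal s 1 x := by
  simp only [gaussianPDFReal, NNReal.coe_one, mul_one, mul_assoc, ← Real.exp_add]
  ring_nf

lemma withDensity_exp_tilt_gaussianReal (s : ℝ) :
    (gaussianReal 0 1).withDensity (fun x ↦ ENNReal.ofReal (rexp (s * x - s ^ 2 / 2)))
      = gaussianReal s 1 := by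
  rw [gaussianReal_of_var_ne_zero _ one_ne_zero, gaussianReal_of_var_ne_zero _ one_ne_zero,
    ← withDensity_mul _ (measurable_gaussianPDF 0 1) (by fun_prop)]
  congr 1
  ext x
  rw [Pi.mul_apply, gaussianPDF, ← ENNReal.ofReal_mul (gaussianPDFReal_nonneg _ _ _),
    gaussianPDFReal_mul_exp_tilt, gaussianPDF]

lemma integral_exp_tilt_mul_gaussianReal_prod (a b : ℝ) (f : ℝ × ℝ → ℝ) :
    ∫ p, rexp (a * p.1 + b * p.2 - (a ^ 2 + b ^ 2) / 2) * f p
        ∂(gaussianReal 0 1).prod (gaussianReal 0 1)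
      = ∫ p, f (p.1 + a, p.2 + b) ∂(gaussianReal 0 1).prod (gaussianReal 0 1) := by
  let shift : ℝ × ℝ ≃ᵐ ℝ × ℝ :=
    (MeasurableEquiv.addRight a).prodCongr (MeasurableEquiv.addRight b)
  have hshift : ((gaussianReal 0 1).prod (gaussianReal 0 1)).withDensity
      (fun p ↦ ENNReal.ofReal (rexp (a * p.1 + b * p.2 - (a ^ 2 + b ^ 2) / 2)))
      = ((gaussianReal 0 1).prod (gaussianReal 0 1)).map shift := by
    have hdensity (p : ℝ × ℝ) : ENNReal.ofReal (rexp (a * p.1 - a ^ 2 / 2))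
        * ENNReal.ofReal (rexp (b * p.2 - b ^ 2 / 2))
        = ENNReal.ofReal (rexp (a * p.1 + b * p.2 - (a ^ 2 + b ^ 2) / 2)) := by
      rw [← ENNReal.ofReal_mul (exp_pos _).le, ← Real.exp_add]; ring_nf
    rw [← funext hdensity,
      ← prod_withDensity (f := fun x ↦ ENNReal.ofReal (rexp (a * x - a ^ 2 / 2)))
        (g := fun x ↦ ENNReal.ofReal (rexp (b * x - b ^ 2 / 2))) (by fun_prop) (by fun_prop),
      withDensity_exp_tilt_gaussianReal, withDensity_exp_tilt_gaussianReal]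
    change _ = Measure.map (Prod.map (· + a) (· + b)) _
    rw [← Measure.map_prod_map _ _ (by fun_prop) (by fun_prop), gaussianReal_map_add_const,
      gaussianReal_map_add_const, zero_add, zero_add]
  calc _ = ∫ p, f p ∂((gaussianReal 0 1).prod (gaussianReal 0 1)).withDensity
        (fun p ↦ ENNReal.ofReal (rexp (a * p.1 + b * p.2 - (a ^ 2 + b ^ 2) / 2))) := by
        rw [integral_withDensity_eq_integral_toReal_smul (by fun_prop)
          (ae_of_all _ fun _ ↦ ENNReal.ofReal_lt_top)]
        simp_rw [ENNReal.toReal_ofReal (exp_pos _).le, smul_eq_mul]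
    _ = _ := by rw [hshift, integral_map_equiv]; rfl

lemma map_linear_gaussianReal_prod (a b : ℝ) :
    ((gaussianReal 0 1).prod (gaussianReal 0 1)).map (fun p ↦ a * p.1 + b * p.2)
      = gaussianReal 0 (a ^ 2 + b ^ 2).toNNReal := by
  have hcomp : (fun p : ℝ × ℝ ↦ a * p.1 + b * p.2)
      = (fun q : ℝ × ℝ ↦ q.1 + q.2) ∘ Prod.map (a * ·) (b * ·) := rfl
  rw [hcomp, ← Measure.map_map (by fun_prop) (by fun_prop),
    ← Measure.map_prod_map _ _ (by fun_prop) (by fun_prop), gaussianReal_map_const_mul,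
    gaussianReal_map_const_mul, ← Measure.conv, gaussianReal_conv_gaussianReal]
  congr 1
  · simp
  · ext
    simp only [NNReal.coe_add, NNReal.coe_mk, mul_one]
    rw [Real.coe_toNNReal _ (by positivity)]

lemma gaussianReal_Ici_eq_stdNormalCDF {σ : ℝ} (hσ : 0 < σ) (c : ℝ) :
    (gaussianReal 0 (σ ^ 2).toNNReal (Set.Ici c)).toReal = stdNormalCDF (-(c / σ)) := by
  have h : (gaussianReal 0 1).map (fun x ↦ -σ * x) = gaussianReal 0 (σ ^ 2).toNNReal := by
    rw [gaussianReal_map_const_mul]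
    congr 1
    · simp
    · ext
      simp only [NNReal.coe_mk, mul_one, neg_sq]
      rw [Real.coe_toNNReal _ (by positivity)]
  rw [← h, Measure.map_apply (by fun_prop) measurableSet_Ici, stdNormalCDF]
  congr 2
  ext x
  rw [Set.mem_preimage, Set.mem_Ici, Set.mem_Iic, le_neg, div_le_iff₀ hσ, neg_mul, neg_mul,
    mul_comm]

lemma gaussianReal_prod_halfPlane {a b σ : ℝ} (hσ : 0 < σ) (hab : a ^ 2 + b ^ 2 = σ ^ 2)
    (c : ℝ) :
    (((gaussianReal 0 1).prod (gaussianReal 0 1)) {p | c ≤ a * p.1 + b * p.2}).toReal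
      = stdNormalCDF (-(c / σ)) := by
  rw [← gaussianReal_Ici_eq_stdNormalCDF hσ, ← hab, ← map_linear_gaussianReal_prod,
    Measure.map_apply (by fun_prop) measurableSet_Ici]
  rfl

lemma setIntegral_exp_tilt_halfPlane {a b σ : ℝ} (hσ : 0 < σ) (hab : a ^ 2 + b ^ 2 = σ ^ 2)
    (h₁ h₂ c : ℝ) :
    ∫ p in {p : ℝ × ℝ | c ≤ a * p.1 + b * p.2},
        rexp (h₁ * p.1 + h₂ * p.2 - (h₁ ^ 2 + h₂ ^ 2) / 2)
        ∂(gaussianReal 0 1).prod (gaussianReal 0 1)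
      = stdNormalCDF ((a * h₁ + b * h₂ - c) / σ) := by
  set S := {p : ℝ × ℝ | c ≤ a * p.1 + b * p.2}
  have hS : MeasurableSet S := measurableSet_le (by fun_prop) (by fun_prop)
  have hshift :
      (fun p : ℝ × ℝ ↦ S.indicator (1 : ℝ × ℝ → ℝ) (p.1 + h₁, p.2 + h₂))
        = {p : ℝ × ℝ | c - (a * h₁ + b * h₂) ≤ a * p.1 + b * p.2}.indicator 1 := by
    ext p
    simp only [S, Set.indicator_apply, Set.mem_ofPred_eq]
    congr 1
    exact propext ⟨fun h ↦ by linarith, fun h ↦ by linarith⟩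
  calc _ = ∫ p, rexp (h₁ * p.1 + h₂ * p.2 - (h₁ ^ 2 + h₂ ^ 2) / 2) * S.indicator 1 p
        ∂(gaussianReal 0 1).prod (gaussianReal 0 1) := by
        rw [← integral_indicator hS]
        congr 1 with p
        by_cases hp : p ∈ S <;> simp [hp]
    _ = _ := by
        rw [integral_exp_tilt_mul_gaussianReal_prod, hshift, integral_indicator_one
          (measurableSet_le (by fun_prop) (by fun_prop)), measureReal_def,
          gaussianReal_prod_halfPlane hσ hab]
        congr 1; ring

lemma integrable_exp_linear_gaussianReal_prod (a b c : ℝ) :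
    Integrable (fun p : ℝ × ℝ ↦ rexp (a * p.1 + b * p.2 - c))
      ((gaussianReal 0 1).prod (gaussianReal 0 1)) := by
  refine (((integrable_exp_mul_gaussianReal a).const_mul (rexp (-c))).mul_prod
    (integrable_exp_mul_gaussianReal b)).congr (ae_of_all _ fun p ↦ ?_)
  simp only [← Real.exp_add]
  ring_nf

lemma mul_exp_le_mul_exp_iff {x y : ℝ} (hx : 0 < x) (hy : 0 < y) (s t : ℝ) :
    x * rexp s ≤ y * rexp t ↔ Real.log x + s ≤ Real.log y + t := by
  rw [← exp_log hx, ← exp_log hy, ← exp_add, ← exp_add, exp_le_exp, log_exp, log_exp]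

theorem integral_max_sub_exp_tilt_gaussianReal_prod {xg xe : ℝ} (hxg : 0 < xg)
    (hxe : 0 < xe) {g₁ g₂ e₁ e₂ σ : ℝ} (hσ : 0 < σ)
    (hσ_sq : (g₁ - e₁) ^ 2 + (g₂ - e₂) ^ 2 = σ ^ 2) :
    ∫ p, max (xg * rexp (g₁ * p.1 + g₂ * p.2 - (g₁ ^ 2 + g₂ ^ 2) / 2)
        - xe * rexp (e₁ * p.1 + e₂ * p.2 - (e₁ ^ 2 + e₂ ^ 2) / 2)) 0
        ∂(gaussianReal 0 1).prod (gaussianReal 0 1)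
      = xg * stdNormalCDF (Real.log (xg / xe) / σ + σ / 2)
        - xe * stdNormalCDF (Real.log (xg / xe) / σ - σ / 2) := by
  set c := Real.log xe - Real.log xg + (g₁ ^ 2 + g₂ ^ 2 - (e₁ ^ 2 + e₂ ^ 2)) / 2
  set S := {p : ℝ × ℝ | c ≤ (g₁ - e₁) * p.1 + (g₂ - e₂) * p.2}
  have hS : MeasurableSet S := measurableSet_le (by fun_prop) (by fun_prop)
  set Xg := fun p : ℝ × ℝ ↦ xg * rexp (g₁ * p.1 + g₂ * p.2 - (g₁ ^ 2 + g₂ ^ 2) / 2)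
  set Xe := fun p : ℝ × ℝ ↦ xe * rexp (e₁ * p.1 + e₂ * p.2 - (e₁ ^ 2 + e₂ ^ 2) / 2)
  have hexercise (p : ℝ × ℝ) : Xe p ≤ Xg p ↔ p ∈ S := by
    simp only [Xe, Xg, S, Set.mem_ofPred_eq, mul_exp_le_mul_exp_iff hxe hxg, c]
    constructor <;> intro h <;> linarith
  have hpayoff : (fun p ↦ max (Xg p - Xe p) 0) = S.indicator (fun p ↦ Xg p - Xe p) := by
    ext p
    by_cases hp : p ∈ S
    · simp [hp, (hexercise p).2 hp]
    · simp [hp, le_of_lt (not_le.1 (mt (hexercise p).1 hp))]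
  have hlog : Real.log (xg / xe) = Real.log xg - Real.log xe := Real.log_div hxg.ne' hxe.ne'
  change ∫ p, max (Xg p - Xe p) 0 ∂_ = _
  rw [hpayoff, integral_indicator hS, integral_sub
      ((integrable_exp_linear_gaussianReal_prod _ _ _).const_mul xg).integrableOn
      ((integrable_exp_linear_gaussianReal_prod _ _ _).const_mul xe).integrableOn,
    integral_const_mul, integral_const_mul, setIntegral_exp_tilt_halfPlane hσ hσ_sq,
    setIntegral_exp_tilt_halfPlane hσ hσ_sq, hlog]
  congr 3
  · field_simp
    linear_combination hσ_sq
  · field_simp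
    linear_combination -hσ_sq

theorem kirk_margrabe_exchange_formula_general
    (xe xg σe σg ρ : ℝ) (hxe : 0 < xe) (hxg : 0 < xg)
    (hσe : 0 < σe) (hρ : ρ ∈ Set.Ioo (-1 : ℝ) 1) :
    let σ := Real.sqrt (σg ^ 2 - 2 * ρ * σe * σg + σe ^ 2)
    0 < σ ∧
    ∫ uw : ℝ × ℝ,
        max (xg * Real.exp (σg * (ρ * uw.1 + Real.sqrt (1 - ρ ^ 2) * uw.2) - σg ^ 2 / 2) -
             xe * Real.exp (σe * uw.1 - σe ^ 2 / 2)) 0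
      ∂((gaussianReal 0 1).prod (gaussianReal 0 1)) =
      xg * stdNormalCDF (Real.log (xg / xe) / σ + σ / 2) -
      xe * stdNormalCDF (Real.log (xg / xe) / σ - σ / 2) := by
  intro σ
  have hρ_sq : 0 < 1 - ρ ^ 2 := by nlinarith [hρ.1, hρ.2]
  have hvar : 0 < σg ^ 2 - 2 * ρ * σe * σg + σe ^ 2 := by
    nlinarith [sq_nonneg (σg - ρ * σe), mul_pos hρ_sq (mul_pos hσe hσe)]
  have hσ : 0 < σ := Real.sqrt_pos.2 hvar
  have hsqrt : Real.sqrt (1 - ρ ^ 2) ^ 2 = 1 - ρ ^ 2 := Real.sq_sqrt hρ_sq.le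
  refine ⟨hσ, ?_⟩
  have hg (p : ℝ × ℝ) : σg * (ρ * p.1 + Real.sqrt (1 - ρ ^ 2) * p.2) - σg ^ 2 / 2
      = σg * ρ * p.1 + σg * Real.sqrt (1 - ρ ^ 2) * p.2
        - ((σg * ρ) ^ 2 + (σg * Real.sqrt (1 - ρ ^ 2)) ^ 2) / 2 := by
    linear_combination (σg ^ 2 / 2) * hsqrt
  have he (p : ℝ × ℝ) :
      σe * p.1 - σe ^ 2 / 2 = σe * p.1 + 0 * p.2 - (σe ^ 2 + 0 ^ 2) / 2 := by
    ring
  simp_rw [hg, he]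
  refine integral_max_sub_exp_tilt_gaussianReal_prod hxg hxe hσ ?_
  rw [Real.sq_sqrt hvar.le]
  linear_combination σg ^ 2 * hsqrt

/-- Kirk's / Margrabe's exchange option formula (exact case `K = 0`): for jointly
log-normal underlyings with correlation `ρ`, realized from two independent standard
Gaussian coordinates, the spread option price is
`x_g·Φ(ln(x_g/x_e)/σ + σ/2) − x_e·Φ(ln(x_g/x_e)/σ − σ/2)`
with `σ = √(σ_g² − 2ρσ_eσ_g + σ_e²)`. -/
theorem kirk_margrabe_exchange_formula
    (xe xg σe σg ρ : ℝ) (hxe : 0 < xe) (hxg : 0 < xg)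
    (hσe : 0 < σe) (hσg : 0 < σg) (hρ : ρ ∈ Set.Ioo (-1 : ℝ) 1) :
    let σ := Real.sqrt (σg ^ 2 - 2 * ρ * σe * σg + σe ^ 2)
    0 < σ ∧
    ∫ uw : ℝ × ℝ,
        max (xg * Real.exp (σg * (ρ * uw.1 + Real.sqrt (1 - ρ ^ 2) * uw.2) - σg ^ 2 / 2) -
             xe * Real.exp (σe * uw.1 - σe ^ 2 / 2)) 0
      ∂((gaussianReal 0 1).prod (gaussianReal 0 1)) =
      xg * stdNormalCDF (Real.log (xg / xe) / σ + σ / 2) -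
      xe * stdNormalCDF (Real.log (xg / xe) / σ - σ / 2) :=
  kirk_margrabe_exchange_formula_general xe xg σe σg ρ hxe hxg hσe hρ
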